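/- For all k, n, λ ≥ 1 and every i with 1 ≤ i ≤ λ, it holds that T^k_{(n+λ, n+i)} ≥ (λ + 1 − i)^{k−1} / ((n+λ)^k · (k−1)!). -/

import Mathlib

/-- The Cesàro operator on real sequences (indexed from 1; index 0 is unused):
`[T(a)]_n = (a_1 + ⋯ + a_n)/n`. -/
noncomputable def cesaro (a : ℕ → ℝ) : ℕ → ℝ :=
  fun n => (∑ i ∈ Finset.Icc 1 n, a i) / n

/-- The matrix entry `T^k_{(n,m)} = [T^k(e_m)]_n` where `e_m` is the sequence whose
`m`-th term is `1` and all other terms are `0`. -/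
noncomputable def cesaroEntry (k n m : ℕ) : ℝ :=
  (cesaro^[k] (fun i => if i = m then (1 : ℝ) else 0)) n

/-!
By induction on `k`, `T^{k+1}_{(m+d, m)} ≥ (d+1)^k / ((m+d)^{k+1} k!)`. Averaging this bound
over the rows `m, …, m+d` (and bounding each denominator by the largest one) produces the power
sum `∑_{t=1}^{d+1} t^k`, which dominates `∫_0^{d+1} x^k dx = (d+1)^{k+1}/(k+1)`.
-/

open Finset

lemma cesaro_nonneg {a : ℕ → ℝ} (ha : ∀ i, 0 ≤ a i) (n : ℕ) : 0 ≤ cesaro a n :=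
  div_nonneg (sum_nonneg fun i _ => ha i) n.cast_nonneg

lemma sum_range_le_mul_cesaro {a : ℕ → ℝ} (ha : ∀ i, 0 ≤ a i) {m : ℕ} (hm : 1 ≤ m) (d : ℕ) :
    ∑ j ∈ range (d + 1), a (m + j) ≤ ((m + d : ℕ) : ℝ) * cesaro a (m + d) := by
  have hpos : (0 : ℝ) < (m + d : ℕ) := by positivity
  rw [cesaro, mul_div_cancel₀ _ hpos.ne', ← Nat.add_sub_cancel_left (n := m) (m := d + 1),
    ← sum_Ico_eq_sum_range]
  refine sum_le_sum_of_subset_of_nonneg ?_ fun i _ _ => ha i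
  intro j hj
  simp only [mem_Ico, mem_Icc] at hj ⊢
  omega

lemma cesaroEntry_zero (n m : ℕ) : cesaroEntry 0 n m = if n = m then 1 else 0 := rfl

lemma cesaroEntry_succ (k n m : ℕ) :
    cesaroEntry (k + 1) n m = cesaro (fun j => cesaroEntry k j m) n :=
  congrFun (Function.iterate_succ_apply' cesaro k _) n

lemma cesaroEntry_nonneg (k n m : ℕ) : 0 ≤ cesaroEntry k n m := by
  induction k generalizing n with
  | zero => rw [cesaroEntry_zero]; split_ifs <;> norm_num
  | succ k ih => rw [cesaroEntry_succ]; exact cesaro_nonneg ih n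

lemma cesaroEntry_one {n m : ℕ} (hm : 1 ≤ m) (hmn : m ≤ n) : cesaroEntry 1 n m = 1 / n := by
  simp only [cesaroEntry_succ, cesaroEntry_zero, cesaro, sum_ite_eq', mem_Icc, hm, hmn, and_self,
    if_true]

lemma pow_succ_div_le_sum_range_pow (a k : ℕ) :
    (a : ℝ) ^ (k + 1) / (k + 1) ≤ ∑ i ∈ range a, ((i + 1 : ℕ) : ℝ) ^ k := by
  have hmono : MonotoneOn (fun x : ℝ => x ^ k) (Set.Icc 0 (0 + a)) :=
    fun x hx y _ hxy => pow_le_pow_left₀ hx.1 hxy k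
  simpa [integral_pow] using hmono.integral_le_sum

lemma le_cesaroEntry_add {m : ℕ} (hm : 1 ≤ m) (k d : ℕ) :
    ((d + 1 : ℕ) : ℝ) ^ k / (((m + d : ℕ) : ℝ) ^ (k + 1) * k.factorial) ≤
      cesaroEntry (k + 1) (m + d) m := by
  induction k generalizing d with
  | zero => simp [cesaroEntry_one hm (Nat.le_add_right m d)]
  | succ k ih =>
    set N : ℝ := ((m + d : ℕ) : ℝ)
    have hN : 0 < N := by positivity
    have hrow : ∀ j ∈ range (d + 1),
        ((j + 1 : ℕ) : ℝ) ^ k / (N ^ (k + 1) * k.factorial) ≤ cesaroEntry (k + 1) (m + j) m := by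
      intro j hj
      refine le_trans ?_ (ih j)
      gcongr
      exact Nat.cast_le.mpr (Nat.add_le_add_left (Nat.lt_succ_iff.mp (mem_range.mp hj)) m)
    calc ((d + 1 : ℕ) : ℝ) ^ (k + 1) / (N ^ (k + 1 + 1) * (k + 1).factorial)
        = ((d + 1 : ℕ) : ℝ) ^ (k + 1) / (k + 1) / (N ^ (k + 1) * k.factorial) / N := by
          rw [Nat.factorial_succ]; push_cast; field_simp; ring
      _ ≤ (∑ j ∈ range (d + 1), ((j + 1 : ℕ) : ℝ) ^ k) / (N ^ (k + 1) * k.factorial) / N := by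
          gcongr; exact pow_succ_div_le_sum_range_pow (d + 1) k
      _ ≤ (∑ j ∈ range (d + 1), cesaroEntry (k + 1) (m + j) m) / N := by
          rw [sum_div]; gcongr with j hj; exact hrow j hj
      _ ≤ cesaroEntry (k + 1 + 1) (m + d) m := by
          rw [div_le_iff₀' hN, cesaroEntry_succ]
          exact sum_range_le_mul_cesaro (fun j => cesaroEntry_nonneg _ j m) hm d

theorem cesaroEntry_lower_bound_general (k n l i : ℕ) (hk : 1 ≤ k)
    (hi1 : 1 ≤ i) (hil : i ≤ l) :
    ((l + 1 - i : ℕ) : ℝ) ^ (k - 1) / (((n + l : ℕ) : ℝ) ^ k * (Nat.factorial (k - 1))) ≤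
      cesaroEntry k (n + l) (n + i) := by
  obtain ⟨k, rfl⟩ : ∃ k', k = k' + 1 := ⟨k - 1, by omega⟩
  obtain ⟨d, rfl⟩ : ∃ d, l = i + d := ⟨l - i, by omega⟩
  have h := le_cesaroEntry_add (m := n + i) (by omega) k d
  rwa [Nat.add_sub_cancel, show i + d + 1 - i = d + 1 by omega, ← add_assoc]

/-- For all `k, n, λ ≥ 1` and every `i` with `1 ≤ i ≤ λ`:
`T^k_{(n+λ, n+i)} ≥ (λ + 1 − i)^{k−1} / ((n+λ)^k · (k−1)!)`. -/
theorem cesaroEntry_lower_bound (k n l i : ℕ) (hk : 1 ≤ k) (hn : 1 ≤ n) (hl : 1 ≤ l)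
    (hi1 : 1 ≤ i) (hil : i ≤ l) :
    ((l + 1 - i : ℕ) : ℝ) ^ (k - 1) / (((n + l : ℕ) : ℝ) ^ k * (Nat.factorial (k - 1))) ≤
      cesaroEntry k (n + l) (n + i) :=
  cesaroEntry_lower_bound_general k n l i hk hi1 hil
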